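/- arXiv:1810.01210 — 4 statements merged into one kernel-verified Lean document; each statement's English description precedes it below -/
import Mathlib

section
/- In any sequence over an alphabet of k+1 symbols of length at least 2k+2, there exists a d-subsequence for some d with 1 ≤ d ≤ k that contains a repetition (two consecutive equal blocks). Equivalently, no sequence of length ≥ 2k+2 over k+1 symbols is k-Thue. -/
/-- A sequence is non-repetitive (Thue) if it contains no factor `w ++ w` with `w` nonempty. -/
def NonRep {α : Type*} (s : List α) : Prop :=
  ∀ w : List α, w ≠ [] → ¬ (w ++ w) <:+: s

/-- The `d`-subsequence of `s` starting at (0-based) index `i`: the terms at indices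
`i, i+d, i+2d, ...`. -/
def dSubseq {α : Type*} (s : List α) (i d : ℕ) : List α :=
  (List.range s.length).filterMap
    (fun j => if i ≤ j ∧ (j - i) % d = 0 then s[j]? else none)

/-- A sequence is `k`-Thue if every `d`-subsequence, for `1 ≤ d ≤ k`, is non-repetitive. -/
def IsKThue {α : Type*} (k : ℕ) (s : List α) : Prop :=
  ∀ d, 1 ≤ d → d ≤ k → ∀ i, NonRep (dSubseq s i d)

/-!
In a `k`-Thue word two equal letters at distance `d ≤ k` would form the square `aa` in a
`d`-subsequence, so any `k + 1` consecutive letters are distinct. Over `k + 1` symbols such a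
window contains every symbol, and the letter just before it is absent from its first `k`
entries, hence equals its last one: the word has period `k + 1`. Its first `2k + 2` letters
are then a square in the `1`-subsequence, i.e. in the word itself.
-/

variable {α : Type*}

theorem dSubseq_eq_nil {s : List α} {i : ℕ} (hi : s.length ≤ i) (d : ℕ) :
    dSubseq s i d = [] := by
  rw [dSubseq, List.filterMap_eq_nil_iff]
  intro j hj
  rw [if_neg (by have := List.mem_range.mp hj; omega)]

theorem dSubseq_eq_cons {s : List α} {i d : ℕ} (hi : i < s.length) (hd : 1 ≤ d) :
    dSubseq s i d = s[i] :: dSubseq s (i + d) d := by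
  have hrange : List.range s.length =
      List.range' 0 i ++ i :: List.range' (i + 1) (s.length - (i + 1)) := by
    conv_lhs => rw [List.range_eq_range', show s.length = i + (s.length - (i + 1) + 1) by omega]
    rw [← List.range'_append_1, List.range'_succ, Nat.zero_add]
  have hstep : ∀ j, i < j →
      (i ≤ j ∧ (j - i) % d = 0 ↔ i + d ≤ j ∧ (j - (i + d)) % d = 0) := by
    intro j hj
    rcases lt_or_ge j (i + d) with hlt | hge
    · simp only [show ¬ i + d ≤ j by omega, false_and, iff_false, not_and]
      intro _ h
      rw [Nat.mod_eq_of_lt (by omega)] at h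
      omega
    · rw [show j - i = j - (i + d) + d by omega, Nat.add_mod_right]
      omega
  rw [dSubseq, dSubseq, hrange, List.filterMap_append, List.filterMap_append,
    List.filterMap_cons, List.filterMap_cons]
  have hnil : ∀ c, i ≤ c → ∀ e : ℕ → ℕ,
      (List.range' 0 i).filterMap (fun j => if c ≤ j ∧ e j % d = 0 then s[j]? else none) = [] :=
    fun c hc e => List.filterMap_eq_nil_iff.2 fun j hj =>
      if_neg (by have := List.mem_range'_1.mp hj; omega)
  have htail : ∀ l : List ℕ, (∀ j ∈ l, i < j) →
      l.filterMap (fun j => if i ≤ j ∧ (j - i) % d = 0 then s[j]? else none) =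
        l.filterMap (fun j => if i + d ≤ j ∧ (j - (i + d)) % d = 0 then s[j]? else none) :=
    fun l hl => List.filterMap_congr fun j hj => by simp only [hstep j (hl j hj)]
  rw [hnil i le_rfl, hnil (i + d) (by omega),
    htail _ fun j hj => by have := List.mem_range'_1.mp hj; omega]
  simp [List.getElem?_eq_getElem hi, show d ≠ 0 by omega]

theorem dSubseq_one (s : List α) (i : ℕ) : dSubseq s i 1 = s.drop i := by
  rcases lt_or_ge i s.length with hi | hi
  · rw [dSubseq_eq_cons hi le_rfl, dSubseq_one s (i + 1), List.drop_eq_getElem_cons hi]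
  · rw [dSubseq_eq_nil hi, List.drop_eq_nil_of_le hi]
termination_by s.length - i

theorem IsKThue.getElem_ne {k : ℕ} {s : List α} (hs : IsKThue k s) {i j : ℕ}
    (hj : j < s.length) (hij : i < j) (hjk : j ≤ i + k) : s[i] ≠ s[j] := by
  obtain ⟨d, rfl⟩ := Nat.exists_eq_add_of_le hij.le
  intro heq
  refine hs d (by omega) (by omega) i [s[i]] (List.cons_ne_nil _ _)
    ⟨[], dSubseq s (i + d + d) d, ?_⟩
  rw [dSubseq_eq_cons (i := i) (by omega) (by omega), dSubseq_eq_cons hj (by omega), ← heq]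
  rfl

theorem IsKThue.nodup_take_drop {k : ℕ} {s : List α} (hs : IsKThue k s) (m : ℕ) :
    ((s.drop m).take (k + 1)).Nodup := by
  rw [List.nodup_iff_getElem?_ne_getElem?]
  intro i j hij hj
  simp only [List.length_take, List.length_drop, lt_min_iff] at hj
  simp only [List.getElem?_take_of_lt (by omega : i < k + 1), List.getElem?_take_of_lt hj.1,
    List.getElem?_drop, List.getElem?_eq_getElem (by omega : m + i < s.length),
    List.getElem?_eq_getElem (by omega : m + j < s.length), ne_eq, Option.some.injEq]
  exact hs.getElem_ne _ (by omega) (by omega)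

theorem List.Nodup.mem_of_card_le_length [Fintype α] {l : List α} (hl : l.Nodup)
    (hcard : Fintype.card α ≤ l.length) (a : α) : a ∈ l := by
  classical
  have huniv : l.toFinset = Finset.univ :=
    Finset.eq_univ_of_card _
      ((List.toFinset_card_of_nodup hl).trans (le_antisymm hl.length_le_card hcard))
  rw [← List.mem_toFinset, huniv]
  exact Finset.mem_univ a

theorem getElem_eq_getElem_add_of_nodup_take_drop [Fintype α] {k : ℕ}
    (hα : Fintype.card α ≤ k + 1) {s : List α} (hs : ∀ m, ((s.drop m).take (k + 1)).Nodup)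
    {m : ℕ} (hm : m + (k + 1) < s.length) : s[m] = s[m + (k + 1)] := by
  have hmem : s[m] ∈ (s.drop (m + 1)).take (k + 1) :=
    (hs (m + 1)).mem_of_card_le_length (by simp; omega) _
  have hnot : s[m] ∉ (s.drop (m + 1)).take k := by
    have := hs m
    rw [List.drop_eq_getElem_cons (by omega), List.take_succ_cons] at this
    exact (List.nodup_cons.mp this).1
  rw [List.take_add_one, List.getElem?_drop, List.getElem?_eq_getElem (by omega)] at hmem
  simpa [hnot, Nat.add_assoc, Nat.add_comm 1 k] using hmem

theorem take_append_take_prefix_of_getElem_add_eq {s : List α} {p : ℕ}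
    (hlen : p + p ≤ s.length)
    (hper : ∀ m (hm : m + p < s.length), s[m] = s[m + p]) : s.take p ++ s.take p <+: s := by
  have hdrop : (s.drop p).take p = s.take p :=
    List.ext_getElem (by simp; omega) fun m hm _ => by
      simp only [List.length_take, List.length_drop, lt_min_iff] at hm
      simp [hper m (by omega), Nat.add_comm]
  have hsq : s.take p ++ s.take p = s.take (p + p) := by rw [List.take_add, hdrop]
  exact hsq ▸ List.take_prefix _ _

/-- No sequence of length at least `2k+2` over an alphabet of `k+1` symbols is `k`-Thue. -/
theorem no_kThue_of_small_alphabet (k : ℕ) (hk : 1 ≤ k)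
    (s : List (Fin (k + 1))) (hlen : 2 * k + 2 ≤ s.length) :
    ¬ IsKThue k s := by
  intro hs
  have hper : ∀ m (hm : m + (k + 1) < s.length), s[m] = s[m + (k + 1)] := fun m hm =>
    getElem_eq_getElem_add_of_nodup_take_drop (by simp) hs.nodup_take_drop hm
  have hsq := take_append_take_prefix_of_getElem_add_eq (by omega) hper
  refine hs 1 le_rfl hk 0 (s.take (k + 1)) (List.ne_nil_of_length_pos (by simp; omega)) ?_
  rw [dSubseq_one, List.drop_zero]
  exact hsq.isInfix
end

section
/- (Currie's insertion lemma) Let φ₀ = x₁...x_t be a non-repetitive sequence over alphabet A, and let φ₁,...,φ_{t+1} be non-repetitive sequences (possibly empty) over alphabet B, where A and B are disjoint. Then the sequence φ₁ x₁ φ₂ x₂ ... φ_t x_t φ_{t+1} is non-repetitive. -/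
/-- The interleaving `φ 0 ++ [x₁] ++ φ 1 ++ [x₂] ++ ⋯ ++ [x_t] ++ φ t`. -/
def interleave {α : Type*} : List α → (ℕ → List α) → List α
  | [], φ => φ 0
  | a :: rest, φ => φ 0 ++ a :: interleave rest (fun n => φ (n + 1))

/-! A square `w ++ w` in the interleaving either contains a letter of `A`, and then deleting
the letters of `B` turns it into a nonempty square in `x`, or it contains no letter of `x` at
all, and then it cannot straddle a separator `xⱼ`, so it lies inside a single `φ i`. -/

namespace List

variable {α : Type*}

theorem infix_or_infix_of_infix_append_cons {a : α} {u l₁ l₂ : List α}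
    (h : u <:+: l₁ ++ a :: l₂) (ha : a ∉ u) : u <:+: l₁ ∨ u <:+: l₂ := by
  rcases infix_append_iff.mp h with h | h | ⟨v, t, rfl, hv, ht⟩
  · exact .inl h
  · rcases infix_cons_iff.mp h with h | h
    · rcases prefix_cons_iff.mp h with rfl | ⟨t, rfl, -⟩
      · exact .inl nil_infix
      · exact absurd mem_cons_self ha
    · exact .inr h
  · rcases prefix_cons_iff.mp ht with rfl | ⟨t, rfl, -⟩
    · exact .inl (by simpa using hv.isInfix)
    · exact absurd (mem_append_right _ mem_cons_self) ha

end List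

section

variable {α : Type*}

theorem exists_infix_of_infix_interleave {u : List α} (x : List α) (φ : ℕ → List α)
    (hux : ∀ a ∈ x, a ∉ u) (h : u <:+: interleave x φ) : ∃ i ≤ x.length, u <:+: φ i := by
  induction x generalizing φ with
  | nil => exact ⟨0, le_rfl, h⟩
  | cons a x ih =>
    rcases List.infix_or_infix_of_infix_append_cons h (hux a List.mem_cons_self) with h | h
    · exact ⟨0, Nat.zero_le _, h⟩
    · obtain ⟨i, hi, hu⟩ := ih _ (fun b hb => hux b (List.mem_cons_of_mem a hb)) h
      exact ⟨i + 1, Nat.succ_le_succ hi, hu⟩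

theorem filter_interleave (p : α → Bool) (x : List α) (φ : ℕ → List α)
    (hx : ∀ a ∈ x, p a) (hφ : ∀ i ≤ x.length, ∀ b ∈ φ i, p b = false) :
    (interleave x φ).filter p = x := by
  induction x generalizing φ with
  | nil => simpa [interleave] using hφ 0 le_rfl
  | cons a x ih =>
    have h₀ : (φ 0).filter p = [] := by simpa using hφ 0 (Nat.zero_le _)
    simp only [interleave, List.filter_append, List.filter_cons, h₀, hx a List.mem_cons_self,
      List.nil_append, if_true]
    rw [ih _ (fun b hb => hx b (List.mem_cons_of_mem a hb))
      (fun i hi => hφ (i + 1) (Nat.succ_le_succ hi))]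

theorem NonRep.not_infix_of_filter {l w : List α} (p : α → Bool) (hl : NonRep (l.filter p))
    (hw : w.filter p ≠ []) : ¬ (w ++ w) <:+: l := fun h =>
  hl _ hw (List.filter_append (l₁ := w) (l₂ := w) ▸ h.filter p)

end

/-- Currie's insertion lemma: inserting non-repetitive sequences over an alphabet `B`
between the terms of a non-repetitive sequence over a disjoint alphabet `A` yields a
non-repetitive sequence. -/
theorem currie_insertion {α : Type*} (A B : Set α) (hAB : Disjoint A B)
    (x : List α) (hxA : ∀ a ∈ x, a ∈ A) (hx : NonRep x)
    (φ : ℕ → List α) (hφB : ∀ i ≤ x.length, ∀ b ∈ φ i, b ∈ B)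
    (hφ : ∀ i ≤ x.length, NonRep (φ i)) :
    NonRep (interleave x φ) := by
  classical
  intro w hw hww
  by_cases hwA : ∃ a ∈ w, a ∈ A
  · obtain ⟨a, ha, haA⟩ := hwA
    let p : α → Bool := fun b => decide (b ∈ A)
    have hproj : (interleave x φ).filter p = x :=
      filter_interleave p x φ (fun b hb => decide_eq_true (hxA b hb))
        (fun i hi b hb => decide_eq_false (hAB.notMem_of_mem_right (hφB i hi b hb)))
    refine (hproj ▸ hx).not_infix_of_filter p ?_ hww
    exact List.ne_nil_of_mem (List.mem_filter.mpr ⟨ha, decide_eq_true haA⟩)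
  · simp only [not_exists, not_and] at hwA
    obtain ⟨i, hi, hwwφ⟩ := exists_infix_of_infix_interleave x φ
      (fun a ha hmem => hwA a (by simpa using hmem) (hxA a ha)) hww
    exact hφ i hi w hw hwwφ
end

section
/- With κ as the hexagonal morphism on {1̄,1̲,2̄,2̲,3̄,3̲} and π the projection to {1,2,3}, the sequence K_t = π(κ^t(1̄)) has length 3^t, and for every i with 0 ≤ i < 3^{t-1}, the block K_t(3i+1) K_t(3i+2) K_t(3i+3) consists of the three pairwise distinct symbols {1,2,3}. -/
/-- The hexagonal morphism `κ` on the auxiliary alphabet `{1̄,1̲,2̄,2̲,3̄,3̲}`,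
encoded as `Fin 6` via `0=1̄, 1=1̲, 2=2̄, 3=2̲, 4=3̄, 5=3̲`:
`κ(1̄)=1̄2̲3̄, κ(2̄)=2̄3̲1̄, κ(3̄)=3̄1̲2̄, κ(1̲)=3̲2̄1̲, κ(2̲)=1̲3̄2̲, κ(3̲)=2̲1̄3̲`. -/
def hexKappa : Fin 6 → List (Fin 6) :=
  ![[0, 3, 4], [5, 2, 1], [2, 5, 0], [1, 4, 3], [4, 1, 2], [3, 0, 5]]

/-- The projection `π` sending both `ā` and `a̲` to `a`, with `{1,2,3}` encoded as `Fin 3`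
via `0=1, 1=2, 2=3`. -/
def hexPi : Fin 6 → Fin 3 := ![0, 0, 1, 1, 2, 2]

/-- The `t`-fold iterate `κ^t(1̄)` as a word over the auxiliary alphabet. -/
def hexIter : ℕ → List (Fin 6)
  | 0 => [0]
  | t + 1 => (hexIter t).flatMap hexKappa

/-- The sequence `K_t = π(κ^t(1̄))`. -/
def hexK (t : ℕ) : List (Fin 3) := (hexIter t).map hexPi

lemma hexKappa_length (a : Fin 6) : (hexKappa a).length = 3 := by
  fin_cases a <;> rfl

lemma flatMap_length (l : List (Fin 6)) : (l.flatMap hexKappa).length = 3 * l.length := by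
  induction l with
  | nil => rfl
  | cons a l ih =>
    simp [List.flatMap_cons, hexKappa_length, ih, Nat.mul_succ, Nat.mul_add]
    ring

lemma hexIter_length (t : ℕ) : (hexIter t).length = 3 ^ t := by
  induction t with
  | zero => rfl
  | succ t ih => rw [hexIter, flatMap_length, ih, pow_succ, Nat.mul_comm]

lemma blk (l : List (Fin 6)) (d : Fin 6) : ∀ i k : ℕ, i < l.length → k < 3 →
    (l.flatMap hexKappa).getD (3 * i + k) d = (hexKappa (l.getD i 0)).getD k d := by
  induction l with
  | nil => intro i k hi; simp at hi
  | cons a l ih =>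
    intro i k hi hk
    rw [List.flatMap_cons]
    cases i with
    | zero =>
      rw [Nat.mul_zero, Nat.zero_add]
      rw [List.getD_eq_getElem?_getD, List.getElem?_append_left (by rw [hexKappa_length a]; exact hk)]
      simp [List.getD_eq_getElem?_getD]
    | succ n =>
      have h3 : 3 * (n + 1) + k = (3 * n + k) + 3 := by ring
      rw [h3, List.getD_eq_getElem?_getD,
        List.getElem?_append_right (by rw [hexKappa_length a]; omega)]
      rw [hexKappa_length a, Nat.add_sub_cancel]
      rw [← List.getD_eq_getElem?_getD]
      exact ih n k (by simpa using Nat.lt_of_succ_lt_succ hi) hk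

lemma hexK_getD (t : ℕ) (n : ℕ) (hn : n < (hexIter t).length) :
    (hexK t).getD n 0 = hexPi ((hexIter t).getD n 0) := by
  rw [hexK, List.getD_eq_getElem?_getD, List.getElem?_map, List.getD_eq_getElem?_getD,
    List.getElem?_eq_getElem hn]
  rfl

lemma kappa_block (a : Fin 6) :
    ({hexPi ((hexKappa a).getD 0 0), hexPi ((hexKappa a).getD 1 0),
        hexPi ((hexKappa a).getD 2 0)} : Finset (Fin 3)) = Finset.univ := by
  fin_cases a <;> decide

/-- `K_t` has length `3^t`, and for `t ≥ 1` and `0 ≤ i < 3^(t-1)`, the `κ`-block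
`K_t(3i+1) K_t(3i+2) K_t(3i+3)` (1-indexed; here 0-indexed as positions `3i, 3i+1, 3i+2`)
consists of the three pairwise distinct symbols `{1,2,3}`. -/
theorem hexK_blocks (t : ℕ) (ht : 1 ≤ t) :
    (hexK t).length = 3 ^ t ∧
      ∀ i < 3 ^ (t - 1),
        ({(hexK t).getD (3 * i) 0, (hexK t).getD (3 * i + 1) 0,
            (hexK t).getD (3 * i + 2) 0} : Finset (Fin 3)) = Finset.univ := by
  obtain ⟨s, rfl⟩ : ∃ s, t = s + 1 := ⟨t - 1, by omega⟩
  constructor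
  · rw [hexK, List.length_map, hexIter_length]
  · intro i hi
    simp only [Nat.add_sub_cancel] at hi
    have hi' : i < (hexIter s).length := by rw [hexIter_length]; exact hi
    have hlen : 3 * i + 2 < (hexIter (s + 1)).length := by
      rw [hexIter_length, pow_succ]; omega
    have h0 : 3 * i < (hexIter (s+1)).length := by omega
    have h1 : 3 * i + 1 < (hexIter (s+1)).length := by omega
    rw [hexK_getD _ _ h0, hexK_getD _ _ h1, hexK_getD _ _ hlen]
    have e0 := blk (hexIter s) 0 i 0 hi' (by norm_num)
    have e1 := blk (hexIter s) 0 i 1 hi' (by norm_num)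
    have e2 := blk (hexIter s) 0 i 2 hi' (by norm_num)
    simp only [Nat.add_zero] at e0
    rw [show hexIter (s+1) = (hexIter s).flatMap hexKappa from rfl, e0, e1, e2]
    exact kappa_block _
end

section
/- For the hexagonal morphism κ and projection π, any two adjacent κ-blocks form a Thue sequence of length 6: for any symbol x in the auxiliary alphabet, the word π(κ(x)κ(y)) contains no factor ww with w nonempty, whenever y is a letter that can follow x in some iterate κ^t(1̄). -/
/-- The set of admissible adjacent pairs. -/
def inS (x y : Fin 6) : Prop :=
  (x, y) ∈ ([(0,3),(3,4),(5,2),(2,1),(2,5),(5,0),(1,4),(4,3),(4,1),(1,2),(3,0),(0,5)] :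
    List (Fin 6 × Fin 6))

instance : DecidablePred fun p : Fin 6 × Fin 6 => inS p.1 p.2 := fun _ => by
  unfold inS; infer_instance

instance (x y : Fin 6) : Decidable (inS x y) := by unfold inS; infer_instance

lemma pair_infix_append {α} (x y : α) : ∀ (u v : List α), [x, y] <:+: u ++ v →
    [x, y] <:+: u ∨ [x, y] <:+: v ∨ ([x] <:+ u ∧ [y] <+: v)
  | [], v, h => Or.inr (Or.inl (by simpa using h))
  | a :: u', v, h => by
    rcases List.infix_cons_iff.mp h with hp | hi
    · obtain ⟨t, ht⟩ := hp
      simp only [List.append_eq, List.cons_append, List.singleton_append] at ht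
      obtain ⟨rfl, ht2⟩ := List.cons_eq_cons.mp ht
      cases u' with
      | nil =>
        refine Or.inr (Or.inr ⟨List.suffix_refl _, ⟨t, ?_⟩⟩)
        simpa using ht2
      | cons b u'' =>
        simp only [List.append_eq, List.cons_append] at ht2
        obtain ⟨rfl, -⟩ := List.cons_eq_cons.mp ht2
        exact Or.inl ⟨[], u'', by simp⟩
    · rcases pair_infix_append x y u' v hi with h1 | h2 | ⟨hs, hp⟩
      · exact Or.inl (List.infix_cons h1)
      · exact Or.inr (Or.inl h2)
      · exact Or.inr (Or.inr ⟨hs.trans (List.suffix_cons a u'), hp⟩)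

lemma inS_of_infix_kappa : ∀ c x y : Fin 6, [x, y] <:+: hexKappa c → inS x y := by decide

lemma inS_boundary : ∀ c d x y : Fin 6, inS c d →
    (hexKappa c).getLast? = some x → (hexKappa d).head? = some y → inS x y := by decide

lemma hexKappa_ne_nil : ∀ d : Fin 6, hexKappa d ≠ [] := by decide

lemma chunk : ∀ (l : List (Fin 6)), (∀ a b, [a, b] <:+: l → inS a b) →
    ∀ x y, [x, y] <:+: l.flatMap hexKappa → inS x y
  | [], _, x, y, h => by simp [List.flatMap] at h
  | c :: l', H, x, y, h => by
    rw [List.flatMap_cons] at h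
    rcases pair_infix_append x y _ _ h with h1 | h2 | ⟨hs, hp⟩
    · exact inS_of_infix_kappa c x y h1
    · exact chunk l' (fun a b hab => H a b (List.infix_cons hab)) x y h2
    · cases l' with
      | nil => simp at hp
      | cons d l'' =>
        have hcd : inS c d := H c d ⟨[], l'', rfl⟩
        refine inS_boundary c d x y hcd ?_ ?_
        · obtain ⟨s, hs'⟩ := hs
          rw [← hs', List.getLast?_concat]
        · rw [List.flatMap_cons] at hp
          obtain ⟨t, ht⟩ := hp
          have hne : hexKappa d ≠ [] := hexKappa_ne_nil d
          have h1 := congrArg List.head? ht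
          rw [List.head?_append_of_ne_nil _ hne] at h1
          simpa using h1.symm

lemma inS_of_iter : ∀ t x y, [x, y] <:+: hexIter t → inS x y := by
  intro t
  induction t with
  | zero => intro x y h; exact absurd h.length_le (by simp [hexIter])
  | succ t ih => intro x y h; exact chunk (hexIter t) ih x y h

lemma nonRep_of_check {α} [DecidableEq α] (s : List α)
    (h : ∀ w ∈ s.tails.flatMap List.inits, w ≠ [] → ¬ (w ++ w) <:+: s) : NonRep s := by
  intro w hw hww
  have hinf : w <:+: s := (List.prefix_append w w).isInfix.trans hww
  obtain ⟨t, hpt, hts⟩ := List.infix_iff_prefix_suffix.mp hinf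
  exact h w (List.mem_flatMap.mpr ⟨t, (List.mem_tails _ _).mpr hts, (List.mem_inits _ _).mpr hpt⟩) hw hww

lemma inS_thue : ∀ x y : Fin 6, inS x y →
    ∀ w ∈ ((hexKappa x ++ hexKappa y).map hexPi).tails.flatMap List.inits, w ≠ [] →
      ¬ (w ++ w) <:+: ((hexKappa x ++ hexKappa y).map hexPi) := by decide

/-- Any two adjacent `κ`-blocks form a Thue sequence of length 6: if `y` can follow `x`
(i.e. `xy` occurs as a factor of some iterate `κ^t(1̄)`), then `π(κ(x)κ(y))` contains no
factor `ww` with `w` nonempty. -/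
theorem hex_adjacent_blocks_thue (x y : Fin 6)
    (hadj : ∃ t : ℕ, [x, y] <:+: hexIter t) :
    NonRep ((hexKappa x ++ hexKappa y).map hexPi) := by
  obtain ⟨t, ht⟩ := hadj
  exact nonRep_of_check _ (inS_thue x y (inS_of_iter t x y ht))
end
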